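/- Let C be a cocomplete category and M : C → C a monad that preserves reflexive coequalizers. Then the category of M-algebras (the Eilenberg–Moore category of M) is cocomplete. -/

import Mathlib

/-!
For each shape `J`, colimits of shape `J` in `Algebra T` amount to a left adjoint of the
constant-diagram functor `Δ : Algebra T ⥤ (J ⥤ Algebra T)`, which we get from the adjoint triangle
theorem applied to the free ⊣ forgetful adjunction whiskered by `J`. Composed with the whiskered
forgetful functor, `Δ` becomes `forget ⋙ Δ`, which has the left adjoint `colim ⋙ free`. The
whiskered counit is pointwise Beck's coequalizer of free algebras, hence a regular epi. Finally,
`Algebra T` has reflexive coequalizers: `forget` creates the colimits that `T` preserves, and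
`forget` sends reflexive pairs to reflexive pairs.
-/

open CategoryTheory CategoryTheory.Limits

universe v u

namespace CategoryTheory

variable {C D : Type*} [Category C] [Category D]

theorem IsReflexivePair.map (G : C ⥤ D) {A B : C} (f g : A ⟶ B) [IsReflexivePair f g] :
    IsReflexivePair (G.map f) (G.map g) :=
  IsReflexivePair.mk' (G.map (commonSection f g))
    (by rw [← G.map_comp, section_comp_left, G.map_id])
    (by rw [← G.map_comp, section_comp_right, G.map_id])

def parallelPairCompIso (H : C ⥤ D) {A B : C} (f g : A ⟶ B) :
    parallelPair (H.map f) (H.map g) ≅ parallelPair f g ⋙ H :=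
  parallelPair.ext (Iso.refl _) (Iso.refl _) (by simp) (by simp)

section ReflexivePair

variable (H : C ⥤ D) {A B : C} (f g : A ⟶ B) [IsReflexivePair f g]

theorem hasColimit_parallelPair_comp [HasReflexiveCoequalizers D] :
    HasColimit (parallelPair f g ⋙ H) :=
  have := IsReflexivePair.map H f g
  hasColimit_of_iso (parallelPairCompIso H f g).symm

theorem preservesColimit_parallelPair_comp {E : Type*} [Category E] (G : D ⥤ E)
    [Monad.PreservesColimitOfIsReflexivePair G] : PreservesColimit (parallelPair f g ⋙ H) G :=
  have := IsReflexivePair.map H f g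
  preservesColimit_of_iso_diagram G (parallelPairCompIso H f g)

end ReflexivePair

/-- Evaluated at `j`, the whiskered counit is `ε_{X j}`, which is the coequalizer of
`F U ε_{X j}` and `ε_{F U X j}` as soon as it is a regular epi at all. -/
def Adjunction.regularEpiWhiskerRightCounit {F : C ⥤ D} {U : D ⥤ C} (adj : F ⊣ U)
    (h : ∀ X, RegularEpi (adj.counit.app X)) (J : Type*) [Category J] (X : J ⥤ D) :
    RegularEpi ((adj.whiskerRight J).counit.app X) where
  W := _
  left := _
  right := _
  w := (adj.whiskerRight J).counit_naturality ((adj.whiskerRight J).counit.app X)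
  isColimit := evaluationJointlyReflectsColimits _ fun j =>
    (isColimitMapCoconeCoforkEquiv _ _).symm
      (Cofork.isColimitOfIsos _ (LiftLeftAdjoint.counitCoequalises adj h (X.obj j)) _
        (Iso.refl _) (Iso.refl _) (Iso.refl _))

namespace Monad

variable {T : Monad C}

def regularEpiAdjCounit (X : Algebra T) : RegularEpi ((Monad.adj T).counit.app X) := by
  simp only [Monad.adj_counit]
  exact ⟨_, _, _, _, beckAlgebraCoequalizer X⟩

instance hasReflexiveCoequalizers_algebra [HasReflexiveCoequalizers C]
    [PreservesColimitOfIsReflexivePair T.toFunctor] : HasReflexiveCoequalizers (Algebra T) where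
  has_coeq A B f g _ := by
    have := hasColimit_parallelPair_comp T.forget f g
    have := preservesColimit_parallelPair_comp T.forget f g T.toFunctor
    have : PreservesColimit ((parallelPair f g ⋙ T.forget) ⋙ T.toFunctor) T.toFunctor :=
      preservesColimit_parallelPair_comp (T.forget ⋙ T.toFunctor) f g T.toFunctor
    exact hasColimit_of_created (parallelPair f g) T.forget

theorem hasColimitsOfShape_algebra (J : Type*) [Category J] [HasColimitsOfShape J C]
    [HasReflexiveCoequalizers (Algebra T)] : HasColimitsOfShape J (Algebra T) := by
  have : (Functor.const J : C ⥤ _).IsRightAdjoint :=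
    hasColimitsOfShape_iff_isRightAdjoint_const.mp ‹_›
  have : (Functor.const J ⋙ (Functor.whiskeringRight J _ _).obj T.forget).IsRightAdjoint :=
    Functor.isRightAdjoint_of_iso (Functor.compConstIso J T.forget)
  exact hasColimitsOfShape_iff_isRightAdjoint_const.mpr <|
    isRightAdjoint_triangle_lift _ ((Monad.adj T).whiskerRight J)
      ((Monad.adj T).regularEpiWhiskerRightCounit regularEpiAdjCounit J)

end Monad

end CategoryTheory

/-- If `C` is cocomplete and the monad `M` preserves reflexive coequalizers, then the
Eilenberg–Moore category of `M`-algebras is cocomplete. -/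
theorem eilenbergMoore_cocomplete (C : Type u) [Category.{v} C] [HasColimits C]
    (M : Monad C)
    (hM : ∀ {A B : C} (f g : A ⟶ B), IsReflexivePair f g →
      PreservesColimit (parallelPair f g) M.toFunctor) :
    HasColimits (Monad.Algebra M) := by
  have : Monad.PreservesColimitOfIsReflexivePair M.toFunctor := ⟨fun _ _ f g h => hM f g h⟩
  exact ⟨fun J _ => Monad.hasColimitsOfShape_algebra J⟩
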